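/- Let g : ℕ → ℕ be the function defined by g(0) = 0 and g(k) = (m+1)! for all k ∈ [m!, (m+1)!) (k, m ∈ ℕ), and let f(x) = log(1+x). Then the sequence {f(k)/f(g(k))}_{k∈ℕ} is bounded (so sup_{m∈ℕ} φ_m(ℕ) < ∞ for the associated submeasures), while for M = 2 and every L > 0 there are infinitely many k ∈ ℕ with f(g(k + ⌊L·f(g(k))⌋))/f(g(k)) ≤ 2; hence the sufficient condition of the preceding proposition fails although sup_{m∈ℕ} φ_m(ℕ) < ∞. -/
import Mathlib


open Filter Topology

/-- `cnt C k` is the number of elements of `C` in `[0, k-1]`. -/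
noncomputable def cnt (C : Set ℕ) (k : ℕ) : ℕ := (C ∩ Set.Iio k).ncard

/-- A modulus function `f : [0,∞) → [0,∞)`: nonnegative, increasing, subadditive,
vanishing exactly at `0`, and right continuous at `0`. -/
def IsModulus (f : ℝ → ℝ) : Prop :=
  (∀ x, 0 ≤ x → 0 ≤ f x) ∧ MonotoneOn f (Set.Ici 0) ∧
  (∀ x y, 0 ≤ x → 0 ≤ y → f (x + y) ≤ f x + f y) ∧
  (∀ x, 0 ≤ x → (f x = 0 ↔ x = 0)) ∧ ContinuousWithinAt f (Set.Ici 0) 0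

/-- `f` is unbounded on `[0,∞)`. -/
def IsUnboundedMod (f : ℝ → ℝ) : Prop := ∀ M : ℝ, ∃ x : ℝ, 0 ≤ x ∧ M < f x

/-- `H↑`: nondecreasing `ℕ`-valued weight functions, i.e. monotone `g : ℕ → ℕ`
with `g(k) → ∞` and `k / g(k)` not converging to `0`. -/
def InHup (g : ℕ → ℕ) : Prop :=
  Monotone g ∧ Tendsto g atTop atTop ∧
  ¬ Tendsto (fun k : ℕ => (k : ℝ) / (g k : ℝ)) atTop (nhds 0)

/-- The modular simple density ideal `Z_g(f)` for a `ℕ`-valued weight function. -/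
def ZgfN (f : ℝ → ℝ) (g : ℕ → ℕ) : Set (Set ℕ) :=
  {C | Tendsto (fun k => f (cnt C k) / f (g k : ℝ)) atTop (nhds 0)}

/-- The submeasure `φ_m` associated with `f`, `g` and the scale sequence `kk`:
`φ_m(C) = f(|C ∩ [k_m, k_{m+1})|) / f(g(k_m))`. -/
noncomputable def phi (f : ℝ → ℝ) (g : ℕ → ℕ) (kk : ℕ → ℕ) (m : ℕ) (C : Set ℕ) : ℝ :=
  f (((C ∩ Set.Ico (kk m) (kk (m + 1))).ncard : ℝ)) / f (g (kk m) : ℝ)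

/-- The weight function with `g(0) = 0` and `g(k) = (m+1)!` for `k ∈ [m!, (m+1)!)`. -/
noncomputable def gFact (k : ℕ) : ℕ :=
  if k = 0 then 0 else Nat.factorial (sInf {n : ℕ | k < Nat.factorial n})

/-- The modulus function `f(x) = log(1+x)`. -/
noncomputable def fLog (x : ℝ) : ℝ := Real.log (1 + x)

lemma fLog_nonneg {x : ℝ} (hx : 0 ≤ x) : 0 ≤ fLog x := by
  unfold fLog; exact Real.log_nonneg (by linarith)

lemma fLog_mono {x y : ℝ} (hx : 0 ≤ x) (hxy : x ≤ y) : fLog x ≤ fLog y := by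
  unfold fLog; exact Real.log_le_log (by linarith) (by linarith)

lemma gFact_gt {k : ℕ} (hk : 1 ≤ k) : k < gFact k := by
  have hne : k ≠ 0 := Nat.one_le_iff_ne_zero.mp hk
  unfold gFact
  rw [if_neg hne]
  have hne' : {n : ℕ | k < Nat.factorial n}.Nonempty :=
    ⟨k + 1, lt_of_lt_of_le (Nat.lt_succ_self k) (Nat.self_le_factorial _)⟩
  exact Nat.sInf_mem hne'

lemma gFact_block {m k : ℕ} (hm : 1 ≤ m) (h1 : Nat.factorial m ≤ k)
    (h2 : k < Nat.factorial (m + 1)) : gFact k = Nat.factorial (m + 1) := by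
  have hk : k ≠ 0 := by
    have := Nat.factorial_pos m; omega
  unfold gFact
  rw [if_neg hk]
  congr 1
  have hmem : m + 1 ∈ {n : ℕ | k < Nat.factorial n} := h2
  refine le_antisymm (Nat.sInf_le hmem) ?_
  by_contra h
  push_neg at h
  have hin : sInf {n : ℕ | k < Nat.factorial n} ∈ {n : ℕ | k < Nat.factorial n} :=
    Nat.sInf_mem ⟨m + 1, hmem⟩
  have : Nat.factorial (sInf {n : ℕ | k < Nat.factorial n}) ≤ Nat.factorial m :=
    Nat.factorial_le (by omega)
  simp only [Set.mem_setOf_eq] at hin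
  omega

lemma sq_le_factorial {m : ℕ} (hm : 5 ≤ m) : (m + 2) ^ 2 ≤ Nat.factorial m := by
  induction m, hm using Nat.le_induction with
  | base => decide
  | succ n hn ih =>
    have h1 : (n + 3) ^ 2 ≤ 2 * (n + 2) ^ 2 := by nlinarith
    calc (n + 1 + 2) ^ 2 ≤ 2 * (n + 2) ^ 2 := h1
      _ ≤ (n + 1) * Nat.factorial n := Nat.mul_le_mul (by omega) ih
      _ = Nat.factorial (n + 1) := rfl

lemma log_fact_bound (m : ℕ) : fLog (Nat.factorial (m + 1) : ℝ) ≤ ((m : ℝ) + 2) ^ 2 := by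
  have h1 : (1 : ℝ) + Nat.factorial (m + 1) ≤ (Nat.factorial (m + 2) : ℝ) := by
    have : 1 + Nat.factorial (m + 1) ≤ Nat.factorial (m + 2) := by
      have h := Nat.factorial_pos (m + 1)
      have : Nat.factorial (m + 2) = (m + 2) * Nat.factorial (m + 1) := rfl
      nlinarith
    exact_mod_cast this
  have h2 : (Nat.factorial (m + 2) : ℝ) ≤ ((m : ℝ) + 2) ^ (m + 2) := by
    have := Nat.factorial_le_pow (m + 2)
    calc (Nat.factorial (m + 2) : ℝ) ≤ ((m + 2 : ℕ) : ℝ) ^ (m + 2) := by exact_mod_cast this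
      _ = ((m : ℝ) + 2) ^ (m + 2) := by push_cast; ring
  have hpos : (0 : ℝ) < (m : ℝ) + 2 := by positivity
  unfold fLog
  calc Real.log (1 + (Nat.factorial (m + 1) : ℝ)) ≤ Real.log (((m : ℝ) + 2) ^ (m + 2)) := by
        apply Real.log_le_log (by positivity) (h1.trans h2)
    _ = ((m : ℝ) + 2) * Real.log ((m : ℝ) + 2) := by
        rw [Real.log_pow]; push_cast; ring
    _ ≤ ((m : ℝ) + 2) * ((m : ℝ) + 2) := by
        have := Real.log_le_sub_one_of_pos hpos
        nlinarith
    _ = ((m : ℝ) + 2) ^ 2 := by ring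

lemma gFact_exists_big (c : ℝ) : ∃ k : ℕ, c ≤ fLog (gFact k : ℝ) := by
  refine ⟨⌈Real.exp c⌉₊ + 1, ?_⟩
  set k : ℕ := ⌈Real.exp c⌉₊ + 1 with hk
  have h1 : Real.exp c ≤ (k : ℝ) := by
    have := Nat.le_ceil (Real.exp c)
    have : (⌈Real.exp c⌉₊ : ℝ) ≤ (k : ℝ) := by exact_mod_cast Nat.le_add_right _ _
    linarith [Nat.le_ceil (Real.exp c)]
  have h2 : (k : ℝ) ≤ (gFact k : ℝ) := by
    exact_mod_cast (gFact_gt (k := k) (by omega)).le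
  calc c = Real.log (Real.exp c) := (Real.log_exp c).symm
    _ ≤ fLog (gFact k : ℝ) := by
        unfold fLog
        apply Real.log_le_log (Real.exp_pos c)
        have := Real.exp_pos c
        linarith

theorem stmt16 (kk : ℕ → ℕ) (hkk0 : kk 0 = 0)
    (hkk : ∀ m : ℕ, 1 ≤ m → kk m = sInf {k : ℕ | (2 : ℝ) ^ m ≤ fLog (gFact k : ℝ)}) :
    (∃ M : ℝ, ∀ k : ℕ, fLog (k : ℝ) / fLog (gFact k : ℝ) ≤ M) ∧
    (∃ M : ℝ, ∀ m : ℕ, phi fLog gFact kk m Set.univ ≤ M) ∧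
    (∀ L : ℝ, 0 < L → ∀ N : ℕ, ∃ k : ℕ, N ≤ k ∧
      fLog (gFact (k + ⌊L * fLog (gFact k : ℝ)⌋₊) : ℝ) / fLog (gFact k : ℝ) ≤ 2) := by
  refine ⟨⟨1, fun k => ?_⟩, ⟨2, fun m => ?_⟩, fun L hL N => ?_⟩
  · -- part 1
    rcases Nat.eq_zero_or_pos k with hk | hk
    · subst hk
      simp [fLog, gFact]
    · have hgk : k < gFact k := gFact_gt hk
      have hden : 0 < fLog (gFact k : ℝ) := by
        unfold fLog
        apply Real.log_pos
        have : (2 : ℕ) ≤ gFact k := by omega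
        have : (2 : ℝ) ≤ (gFact k : ℝ) := by exact_mod_cast this
        linarith
      rw [div_le_one hden]
      exact fLog_mono (by positivity) (by exact_mod_cast hgk.le)
  · -- part 2
    rcases Nat.eq_zero_or_pos m with hm | hm
    · subst hm
      have : gFact (kk 0) = 0 := by rw [hkk0]; simp [gFact]
      simp [phi, this, fLog]
    · set a := kk m with ha
      set b := kk (m + 1) with hb
      have haS : a = sInf {k : ℕ | (2 : ℝ) ^ m ≤ fLog (gFact k : ℝ)} := hkk m hm
      have hbS : b = sInf {k : ℕ | (2 : ℝ) ^ (m + 1) ≤ fLog (gFact k : ℝ)} := hkk (m + 1) (by omega)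
      have hden : (2 : ℝ) ^ m ≤ fLog (gFact a : ℝ) := by
        rw [haS]
        exact Nat.sInf_mem (gFact_exists_big ((2 : ℝ) ^ m))
      have hdenpos : 0 < fLog (gFact a : ℝ) := lt_of_lt_of_le (by positivity) hden
      have hcard : (Set.univ ∩ Set.Ico a b).ncard = b - a := by
        rw [Set.univ_inter, ← Finset.coe_Ico, Set.ncard_coe_finset, Nat.card_Ico]
      have hb2 : fLog (b : ℝ) ≤ (2 : ℝ) ^ (m + 1) := by
        rcases le_or_gt b 1 with hble | hbgt
        · have h1 : fLog (b : ℝ) ≤ fLog 1 := fLog_mono (by positivity) (by exact_mod_cast hble)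
          have h2 : fLog 1 ≤ 1 := by
            unfold fLog
            have := Real.log_le_sub_one_of_pos (x := 2) (by norm_num)
            norm_num at this ⊢
            linarith
          have h3 : (1 : ℝ) ≤ 2 ^ (m + 1) := one_le_pow₀ (by norm_num)
          linarith
        · have hnot : b - 1 ∉ {k : ℕ | (2 : ℝ) ^ (m + 1) ≤ fLog (gFact k : ℝ)} := by
            apply Nat.notMem_of_lt_sInf
            omega
          simp only [Set.mem_setOf_eq, not_le] at hnot
          have hg : b ≤ gFact (b - 1) := by
            have := gFact_gt (k := b - 1) (by omega)
            omega
          have : fLog (b : ℝ) ≤ fLog (gFact (b - 1) : ℝ) :=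
            fLog_mono (by positivity) (by exact_mod_cast hg)
          linarith
      have hnum : fLog (((Set.univ ∩ Set.Ico a b).ncard : ℝ)) ≤ 2 * fLog (gFact a : ℝ) := by
        calc fLog (((Set.univ ∩ Set.Ico a b).ncard : ℝ)) ≤ fLog (b : ℝ) := by
              apply fLog_mono (by positivity)
              rw [hcard]
              exact_mod_cast Nat.sub_le b a
          _ ≤ (2 : ℝ) ^ (m + 1) := hb2
          _ = 2 * 2 ^ m := by ring
          _ ≤ 2 * fLog (gFact a : ℝ) := by linarith
      unfold phi
      rw [div_le_iff₀ hdenpos]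
      exact hnum
  · -- part 3
    set m : ℕ := max N (max 5 (⌈L⌉₊ + 1)) with hm
    have hm5 : 5 ≤ m := le_trans (le_max_left _ _) (le_max_right _ _)
    have hmL : L < (m : ℝ) := by
      have h1 : ⌈L⌉₊ + 1 ≤ m := le_trans (le_max_right _ _) (le_max_right _ _)
      have h2 : L ≤ (⌈L⌉₊ : ℝ) := Nat.le_ceil L
      have : ((⌈L⌉₊ : ℕ) : ℝ) + 1 ≤ (m : ℝ) := by exact_mod_cast h1
      linarith
    refine ⟨Nat.factorial m, le_trans (le_trans (le_max_left _ _) (Nat.self_le_factorial m)) le_rfl, ?_⟩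
    have hlt : Nat.factorial m < Nat.factorial (m + 1) := by
      rw [Nat.factorial_lt (by omega)]; omega
    have hg : gFact (Nat.factorial m) = Nat.factorial (m + 1) :=
      gFact_block (by omega) le_rfl hlt
    rw [hg]
    set F : ℕ := ⌊L * fLog (Nat.factorial (m + 1) : ℝ)⌋₊ with hF
    have hFbound : (F : ℝ) < (m : ℝ) * (Nat.factorial m : ℝ) := by
      have h0 : 0 ≤ fLog (Nat.factorial (m + 1) : ℝ) := fLog_nonneg (by positivity)
      have h1 : (F : ℝ) ≤ L * fLog (Nat.factorial (m + 1) : ℝ) :=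
        Nat.floor_le (by positivity)
      have h2 : L * fLog (Nat.factorial (m + 1) : ℝ) ≤ L * ((m : ℝ) + 2) ^ 2 :=
        mul_le_mul_of_nonneg_left (log_fact_bound m) hL.le
      have h3 : L * ((m : ℝ) + 2) ^ 2 < (m : ℝ) * ((m : ℝ) + 2) ^ 2 := by
        apply mul_lt_mul_of_pos_right hmL (by positivity)
      have h4 : ((m : ℝ) + 2) ^ 2 ≤ (Nat.factorial m : ℝ) := by
        have := sq_le_factorial hm5
        calc ((m : ℝ) + 2) ^ 2 = (((m + 2 : ℕ)) : ℝ) ^ 2 := by push_cast; ring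
          _ ≤ (Nat.factorial m : ℝ) := by exact_mod_cast this
      have h5 : (m : ℝ) * ((m : ℝ) + 2) ^ 2 ≤ (m : ℝ) * (Nat.factorial m : ℝ) :=
        mul_le_mul_of_nonneg_left h4 (by positivity)
      linarith
    have hFnat : F < m * Nat.factorial m := by exact_mod_cast hFbound
    have hlt2 : Nat.factorial m + F < Nat.factorial (m + 1) := by
      have h1 : Nat.factorial (m + 1) = Nat.factorial m + m * Nat.factorial m := by
        rw [Nat.factorial_succ]; ring
      omega
    have hg2 : gFact (Nat.factorial m + F) = Nat.factorial (m + 1) :=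
      gFact_block (by omega) (Nat.le_add_right _ _) hlt2
    rw [hg2]
    have hpos : 0 < fLog (Nat.factorial (m + 1) : ℝ) := by
      unfold fLog
      apply Real.log_pos
      have := Nat.factorial_pos (m + 1)
      have : (1 : ℝ) ≤ (Nat.factorial (m + 1) : ℝ) := by exact_mod_cast this
      linarith
    rw [div_self hpos.ne']
    norm_num
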